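/- arXiv:1901.02572 — 9 statements merged into one kernel-verified Lean document; each statement's English description precedes it below -/
import Mathlib

section
/- Let E be a finite type, p ⊆ E a nonempty finite set of edges, λ ≥ 0, C : E → ℝ, and γ ≥ 0. Define h : Finset E → ℝ by h(A) = λ − min(λ, min_{e ∈ p} C̃_A(e)), where C̃_A(e) = C(e) − γ if e ∈ A and C̃_A(e) = C(e) otherwise. Then h is monotone and submodular. -/
/-- Throughput reduction on a single user path is monotone and submodular. -/
theorem single_path_reduction_monotone_submodular
    {E : Type*} [Fintype E] [DecidableEq E]
    (p : Finset E) (hp : p.Nonempty)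
    (lam : ℝ) (hlam : 0 ≤ lam)
    (C : E → ℝ) (γ : ℝ) (hγ : 0 ≤ γ) :
    let Ct : Finset E → E → ℝ := fun A e => if e ∈ A then C e - γ else C e
    let h : Finset E → ℝ := fun A => lam - min lam (p.inf' hp (Ct A))
    (∀ A B : Finset E, A ⊆ B → h A ≤ h B) ∧
    (∀ A B : Finset E, A ⊆ B → ∀ e : E,
      h (insert e A) - h A ≥ h (insert e B) - h B) := by
  intro Ct h
  have hCt_mono : ∀ {A B : Finset E}, A ⊆ B → ∀ x, Ct B x ≤ Ct A x := by
    intro A B hAB x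
    simp only [Ct]
    by_cases hx : x ∈ A
    · simp [hx, hAB hx]
    · by_cases hxB : x ∈ B <;> simp [hx, hxB] <;> linarith
  have hinf_mono : ∀ {A B : Finset E}, A ⊆ B →
      p.inf' hp (Ct B) ≤ p.inf' hp (Ct A) := by
    intro A B hAB
    apply Finset.le_inf'
    intro b hb
    exact le_trans (Finset.inf'_le _ hb) (hCt_mono hAB b)
  have hmono : ∀ A B : Finset E, A ⊆ B → h A ≤ h B := by
    intro A B hAB
    have h1 : min lam (p.inf' hp (Ct B)) ≤ min lam (p.inf' hp (Ct A)) :=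
      min_le_min le_rfl (hinf_mono hAB)
    simp only [h]
    linarith
  refine ⟨hmono, ?_⟩
  intro A B hAB e
  by_cases hep : e ∈ p
  · by_cases heA : e ∈ A
    · have h1 : insert e A = A := Finset.insert_eq_self.mpr heA
      have h2 : insert e B = B := Finset.insert_eq_self.mpr (hAB heA)
      rw [h1, h2]
      linarith
    · by_cases heB : e ∈ B
      · have h2 : insert e B = B := Finset.insert_eq_self.mpr heB
        rw [h2]
        have := hmono A (insert e A) (Finset.subset_insert e A)
        linarith
      · have key : ∀ {S : Finset E}, e ∉ S →
            p.inf' hp (Ct (insert e S)) = min (p.inf' hp (Ct S)) (C e - γ) := by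
          intro S heS
          apply le_antisymm
          · apply le_min
            · exact hinf_mono (Finset.subset_insert e S)
            · have he : Ct (insert e S) e = C e - γ := by simp [Ct]
              calc p.inf' hp (Ct (insert e S)) ≤ Ct (insert e S) e :=
                    Finset.inf'_le _ hep
                _ = C e - γ := he
          · apply Finset.le_inf'
            intro x hx
            by_cases hxe : x = e
            · subst hxe
              have hv : Ct (insert x S) x = C x - γ := by simp [Ct]
              rw [hv]; exact min_le_right _ _
            · have hv : Ct (insert e S) x = Ct S x := by simp [Ct, hxe]
              rw [hv]
              exact le_trans (min_le_left _ _) (Finset.inf'_le _ hx)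
        simp only [h, ge_iff_le, key heA, key heB]
        rw [inf_inf_distrib_left (a := lam), inf_inf_distrib_left (a := lam)]
        set gA := min lam (p.inf' hp (Ct A)) with hgA
        set gB := min lam (p.inf' hp (Ct B)) with hgB
        set m := min lam (C e - γ) with hm
        have hg : gB ≤ gA := min_le_min le_rfl (hinf_mono hAB)
        rcases le_total gA m with h1 | h1 <;> rcases le_total gB m with h2 | h2 <;>
          simp [min_eq_left, min_eq_right, h1, h2] <;> linarith
  · have key : ∀ S : Finset E, p.inf' hp (Ct (insert e S)) = p.inf' hp (Ct S) := by
      intro S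
      apply Finset.inf'_congr _ rfl
      intro x hx
      have hxe : x ≠ e := fun hxe => hep (hxe ▸ hx)
      simp [Ct, hxe]
    simp only [h, key A, key B]
    linarith
end

section
/- (Lemma 1) The throughput reduction function Λ : Finset E → ℝ for disjoint user paths, defined by Λ(A) = Σ_{i=0}^{k−1} (λ i − min(λ i, min_{e ∈ p i} C̃_A(e))), is monotone and submodular. -/
open Finset

private lemma min_sub_aux (l a b c : ℝ) (hba : b ≤ a) :
    min l b - min l (min b c) ≤ min l a - min l (min a c) := by
  simp only [min_def]
  split_ifs <;> linarith

/-- Lemma 1: the throughput reduction function for disjoint user paths is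
monotone and submodular. -/
theorem disjoint_paths_reduction_monotone_submodular
    {E : Type*} [Fintype E] [DecidableEq E]
    (k : ℕ) (hk : 1 ≤ k)
    (p : Fin k → Finset E) (hp : ∀ i, (p i).Nonempty)
    (hdisj : ∀ i j, i ≠ j → Disjoint (p i) (p j))
    (lam : Fin k → ℝ) (hlam : ∀ i, 0 ≤ lam i)
    (C : E → ℝ) (γ : ℝ) (hγ : 0 ≤ γ) :
    let Ct : Finset E → E → ℝ := fun A e => if e ∈ A then C e - γ else C e
    let Λ : Finset E → ℝ := fun A =>
      ∑ i : Fin k, (lam i - min (lam i) ((p i).inf' (hp i) (Ct A)))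
    (∀ A B : Finset E, A ⊆ B → Λ A ≤ Λ B) ∧
    (∀ A B : Finset E, A ⊆ B → ∀ e : E,
      Λ (insert e A) - Λ A ≥ Λ (insert e B) - Λ B) := by
  intro Ct Λ
  have hCt_anti : ∀ {A B : Finset E}, A ⊆ B → ∀ e, Ct B e ≤ Ct A e := by
    intro A B hAB e
    simp only [Ct]
    by_cases hA : e ∈ A
    · rw [if_pos hA, if_pos (hAB hA)]
    · rw [if_neg hA]; split <;> linarith
  have hm_anti : ∀ (i : Fin k) {A B : Finset E}, A ⊆ B →
      (p i).inf' (hp i) (Ct B) ≤ (p i).inf' (hp i) (Ct A) := by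
    intro i A B hAB
    apply Finset.le_inf'
    intro b hb
    exact le_trans (Finset.inf'_le _ hb) (hCt_anti hAB b)
  have hins : ∀ (i : Fin k) (A : Finset E) (e : E), e ∈ p i →
      (p i).inf' (hp i) (Ct (insert e A)) =
        min ((p i).inf' (hp i) (Ct A)) (C e - γ) := by
    intro i A e he
    apply le_antisymm
    · apply le_min
      · exact hm_anti i (Finset.subset_insert e A)
      · have h1 : Ct (insert e A) e = C e - γ := by simp [Ct]
        calc (p i).inf' (hp i) (Ct (insert e A)) ≤ Ct (insert e A) e :=
              Finset.inf'_le _ he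
          _ = C e - γ := h1
    · apply Finset.le_inf'
      intro b hb
      by_cases hbe : b = e
      · subst hbe
        have h1 : Ct (insert b A) b = C b - γ := by simp [Ct]
        rw [h1]; exact min_le_right _ _
      · have h1 : Ct (insert e A) b = Ct A b := by
          simp only [Ct, Finset.mem_insert]
          by_cases hbA : b ∈ A <;> simp [hbe, hbA]
        rw [h1]
        exact le_trans (min_le_left _ _) (Finset.inf'_le _ hb)
  have hins' : ∀ (i : Fin k) (A : Finset E) (e : E), e ∉ p i →
      (p i).inf' (hp i) (Ct (insert e A)) = (p i).inf' (hp i) (Ct A) := by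
    intro i A e he
    apply Finset.inf'_congr _ rfl
    intro b hb
    have hbe : b ≠ e := fun h => he (h ▸ hb)
    simp only [Ct, Finset.mem_insert]
    by_cases hbA : b ∈ A <;> simp [hbe, hbA]
  constructor
  · intro A B hAB
    apply Finset.sum_le_sum
    intro i _
    have h1 := hm_anti i hAB
    have h2 : min (lam i) ((p i).inf' (hp i) (Ct B)) ≤
        min (lam i) ((p i).inf' (hp i) (Ct A)) := min_le_min le_rfl h1
    linarith
  · intro A B hAB e
    rw [ge_iff_le]
    have key : ∀ i : Fin k,
        (lam i - min (lam i) ((p i).inf' (hp i) (Ct (insert e B)))) -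
          (lam i - min (lam i) ((p i).inf' (hp i) (Ct B)))
        ≤ (lam i - min (lam i) ((p i).inf' (hp i) (Ct (insert e A)))) -
          (lam i - min (lam i) ((p i).inf' (hp i) (Ct A))) := by
      intro i
      by_cases he : e ∈ p i
      · rw [hins i A e he, hins i B e he]
        have := min_sub_aux (lam i) ((p i).inf' (hp i) (Ct A))
          ((p i).inf' (hp i) (Ct B)) (C e - γ) (hm_anti i hAB)
        linarith
      · rw [hins' i A e he, hins' i B e he]
        linarith
    simp only [Λ]
    rw [← Finset.sum_sub_distrib, ← Finset.sum_sub_distrib]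
    exact Finset.sum_le_sum fun i _ => key i
end

section
/- (Key step of Theorem 1) Let E be a finite type and f : Finset E → ℝ be monotone and submodular. For X, A : Finset E write f_X(A) = f(X ∪ A) − f(X). Let c > 0 be a real number and let X, A₁, A₂, B₁, B₂ : Finset E satisfy f_X(B₁) ≥ (1/c)·f_X(A₁) and f_{X ∪ B₁}(B₂) ≥ (1/c)·f_{X ∪ B₁}(A₂). Then f_X(B₁ ∪ B₂) ≥ (1/(c+1))·f_X(A₁ ∪ A₂). -/
/-- Diminishing returns for sets: marginal gain of a set shrinks as the base grows. -/
lemma marginal_antitone {E : Type*} [DecidableEq E]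
    (f : Finset E → ℝ)
    (hsub : ∀ A B : Finset E, A ⊆ B → ∀ e : E,
      f (insert e A) - f A ≥ f (insert e B) - f B)
    (A : Finset E) : ∀ S T : Finset E, S ⊆ T →
      f (T ∪ A) - f T ≤ f (S ∪ A) - f S := by
  induction A using Finset.induction_on with
  | empty => intro S T _; simp
  | @insert e A he ih =>
    intro S T hST
    have h1 := hsub (S ∪ A) (T ∪ A) (Finset.union_subset_union_left hST) e
    have h2 := ih S T hST
    rw [Finset.union_insert, Finset.union_insert]
    linarith

/-- Key step of Theorem 1: concatenating two greedy `c`-approximate sub-solutions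
yields a `(c+1)`-approximation for a monotone submodular function. -/
theorem recursive_greedy_key_step
    {E : Type*} [Fintype E] [DecidableEq E]
    (f : Finset E → ℝ)
    (hmono : ∀ A B : Finset E, A ⊆ B → f A ≤ f B)
    (hsub : ∀ A B : Finset E, A ⊆ B → ∀ e : E,
      f (insert e A) - f A ≥ f (insert e B) - f B)
    (c : ℝ) (hc : 0 < c)
    (X A₁ A₂ B₁ B₂ : Finset E)
    (h₁ : f (X ∪ B₁) - f X ≥ (1 / c) * (f (X ∪ A₁) - f X))
    (h₂ : f ((X ∪ B₁) ∪ B₂) - f (X ∪ B₁) ≥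
      (1 / c) * (f ((X ∪ B₁) ∪ A₂) - f (X ∪ B₁))) :
    f (X ∪ (B₁ ∪ B₂)) - f X ≥ (1 / (c + 1)) * (f (X ∪ (A₁ ∪ A₂)) - f X) := by
  set T := (X ∪ B₁) ∪ B₂ with hT
  have hXT : X ⊆ T := by intro x hx; simp [hT, Finset.mem_union, hx]
  have hXB₁T : X ∪ B₁ ⊆ T ∪ A₁ := by
    intro x hx; simp only [hT, Finset.mem_union] at *; tauto
  have m1 := marginal_antitone f hsub A₁ X T hXT
  have m2 := marginal_antitone f hsub A₂ (X ∪ B₁) (T ∪ A₁) hXB₁T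
  have mono : f (X ∪ (A₁ ∪ A₂)) ≤ f ((T ∪ A₁) ∪ A₂) := by
    apply hmono; intro x hx
    simp only [hT, Finset.mem_union] at *; tauto
  have hTX : X ∪ (B₁ ∪ B₂) = T := by rw [hT, Finset.union_assoc]
  rw [hTX]
  -- from h₁, h₂: c * (f T - f X) ≥ (f (X∪A₁) - f X) + (f ((X∪B₁)∪A₂) - f (X∪B₁))
  rw [ge_iff_le, one_div, inv_mul_le_iff₀ hc] at h₁ h₂
  have key : c * (f T - f X) ≥ f (X ∪ (A₁ ∪ A₂)) - f T := by linarith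
  rw [ge_iff_le, div_mul_eq_mul_div, div_le_iff₀ (by linarith)]
  linarith
end

section
/- (Key step of Theorem 4) Let E be a finite type and f : Finset E → ℝ be monotone and submodular; write f_X(A) = f(X ∪ A) − f(X). Let a ≥ 1 be a natural number, c > 0 a real number, X : Finset E, and A, B : Fin a → Finset E. For j ∈ Fin a let X⁽ʲ⁾ = X ∪ B 0 ∪ ⋯ ∪ B (j−1) (with X⁽⁰⁾ = X). If f_{X⁽ʲ⁾}(B j) ≥ (1/c)·f_{X⁽ʲ⁾}(A j) for every j ∈ Fin a, then f_X(B 0 ∪ ⋯ ∪ B (a−1)) ≥ (1/(c+1))·f_X(A 0 ∪ ⋯ ∪ A (a−1)). -/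
open Finset

private lemma submod_sets {E : Type*} [DecidableEq E] (f : Finset E → ℝ)
    (hsub : ∀ A B : Finset E, A ⊆ B → ∀ e : E,
      f (insert e A) - f A ≥ f (insert e B) - f B) :
    ∀ (A X Y : Finset E), X ⊆ Y → f (Y ∪ A) - f Y ≤ f (X ∪ A) - f X := by
  intro A
  induction A using Finset.induction_on with
  | empty => simp
  | @insert e s he ih =>
    intro X Y hXY
    have h1 := hsub (X ∪ s) (Y ∪ s) (union_subset_union_left hXY) e
    have h2 := ih X Y hXY
    rw [union_insert, union_insert]
    linarith

private lemma subadd {E ι : Type*} [DecidableEq E] [DecidableEq ι] (f : Finset E → ℝ)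
    (hsub : ∀ A B : Finset E, A ⊆ B → ∀ e : E,
      f (insert e A) - f A ≥ f (insert e B) - f B)
    (A : ι → Finset E) :
    ∀ (T : Finset ι) (S : Finset E),
      f (S ∪ T.biUnion A) - f S ≤ ∑ j ∈ T, (f (S ∪ A j) - f S) := by
  intro T
  induction T using Finset.induction_on with
  | empty => simp
  | @insert j T hj ih =>
    intro S
    rw [biUnion_insert, sum_insert hj]
    have h1 : f ((S ∪ T.biUnion A) ∪ A j) - f (S ∪ T.biUnion A)
        ≤ f (S ∪ A j) - f S := submod_sets f hsub (A j) S _ subset_union_left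
    have h2 := ih S
    have heq : S ∪ (A j ∪ T.biUnion A) = (S ∪ T.biUnion A) ∪ A j := by
      rw [union_comm (A j), union_assoc]
    rw [heq]
    linarith

/-- Key step of Theorem 4: concatenating `a` greedy `c`-approximate sub-solutions
around `a - 1` anchors yields a `(c+1)`-approximation for a monotone submodular
function. -/
theorem generalized_recursive_greedy_key_step
    {E : Type*} [Fintype E] [DecidableEq E]
    (f : Finset E → ℝ)
    (hmono : ∀ A B : Finset E, A ⊆ B → f A ≤ f B)
    (hsub : ∀ A B : Finset E, A ⊆ B → ∀ e : E,
      f (insert e A) - f A ≥ f (insert e B) - f B)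
    (a : ℕ) (ha : 1 ≤ a) (c : ℝ) (hc : 0 < c)
    (X : Finset E) (A B : Fin a → Finset E)
    (Xj : Fin a → Finset E)
    (hXj : ∀ j : Fin a, Xj j = X ∪ (univ.filter (fun i : Fin a => i < j)).biUnion B)
    (hgreedy : ∀ j : Fin a,
      f (Xj j ∪ B j) - f (Xj j) ≥ (1 / c) * (f (Xj j ∪ A j) - f (Xj j))) :
    f (X ∪ univ.biUnion B) - f X ≥
      (1 / (c + 1)) * (f (X ∪ univ.biUnion A) - f X) := by
  set S : Finset E := X ∪ univ.biUnion B with hS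
  set G : ℕ → ℝ := fun n => f (X ∪ (univ.filter (fun i : Fin a => (i : ℕ) < n)).biUnion B)
    with hG
  have hG0 : G 0 = f X := by simp [hG]
  have hGa : G a = f S := by
    have : (univ.filter (fun i : Fin a => (i : ℕ) < a)) = univ := by
      apply filter_true_of_mem; intro i _; exact i.isLt
    simp [hG, this, hS]
  -- Xj identification
  have hXjG : ∀ (n : ℕ) (hn : n < a), f (Xj ⟨n, hn⟩) = G n := by
    intro n hn
    rw [hXj]
    congr 2
  have hXjG1 : ∀ (n : ℕ) (hn : n < a), f (Xj ⟨n, hn⟩ ∪ B ⟨n, hn⟩) = G (n + 1) := by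
    intro n hn
    rw [hXj]
    have hfil : (univ.filter (fun i : Fin a => (i : ℕ) < n + 1))
        = insert ⟨n, hn⟩ (univ.filter (fun i : Fin a => (i : ℕ) < n)) := by
      ext i
      simp only [mem_filter, mem_univ, true_and, mem_insert, Fin.ext_iff]
      omega
    have : X ∪ (univ.filter (fun i : Fin a => i < (⟨n, hn⟩ : Fin a))).biUnion B ∪ B ⟨n, hn⟩
        = X ∪ (univ.filter (fun i : Fin a => (i : ℕ) < n + 1)).biUnion B := by
      rw [hfil, biUnion_insert]
      have hfe : (univ.filter (fun i : Fin a => i < (⟨n, hn⟩ : Fin a)))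
          = (univ.filter (fun i : Fin a => (i : ℕ) < n)) := by
        apply filter_congr; intro i _; simp [Fin.lt_def]
      rw [hfe, union_comm (B ⟨n, hn⟩), union_assoc]
    rw [this]
  have hXjS : ∀ j : Fin a, Xj j ⊆ S := by
    intro j
    rw [hXj]
    exact union_subset_union_right (biUnion_subset_biUnion_of_subset_left B (filter_subset _ _))
  -- per-step bound
  set AA : ℕ → Finset E := fun n => if h : n < a then A ⟨n, h⟩ else ∅ with hAA
  have hstep : ∀ n ∈ Finset.range a,
      (1 / c) * (f (S ∪ AA n) - f S) ≤ G (n + 1) - G n := by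
    intro n hn
    have hna : n < a := Finset.mem_range.mp hn
    have h1 := hgreedy ⟨n, hna⟩
    have h2 : f (S ∪ A ⟨n, hna⟩) - f S ≤ f (Xj ⟨n, hna⟩ ∪ A ⟨n, hna⟩) - f (Xj ⟨n, hna⟩) :=
      submod_sets f hsub (A ⟨n, hna⟩) _ _ (hXjS ⟨n, hna⟩)
    have h3 : (1 / c) * (f (S ∪ A ⟨n, hna⟩) - f S)
        ≤ (1 / c) * (f (Xj ⟨n, hna⟩ ∪ A ⟨n, hna⟩) - f (Xj ⟨n, hna⟩)) := by
      apply mul_le_mul_of_nonneg_left h2 (by positivity)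
    rw [← hXjG n hna, ← hXjG1 n hna]
    simp only [hAA, dif_pos hna]
    linarith
  -- telescoping
  have htel : ∑ n ∈ Finset.range a, (G (n + 1) - G n) = f S - f X := by
    rw [Finset.sum_range_sub G a, hGa, hG0]
  -- sum bound
  have hsum1 : ∑ n ∈ Finset.range a, ((1 / c) * (f (S ∪ AA n) - f S))
      ≤ f S - f X := by
    rw [← htel]
    apply Finset.sum_le_sum
    intro n hn
    exact hstep n hn
  have hsum2 : ∑ n ∈ Finset.range a, ((1 / c) * (f (S ∪ AA n) - f S))
      = (1 / c) * ∑ j : Fin a, (f (S ∪ A j) - f S) := by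
    rw [← Finset.mul_sum]
    congr 1
    rw [← Fin.sum_univ_eq_sum_range (fun n => f (S ∪ AA n) - f S) a]
    apply Finset.sum_congr rfl
    intro j _
    simp [hAA, j.isLt]
  have hsub2 : f (S ∪ univ.biUnion A) - f S ≤ ∑ j : Fin a, (f (S ∪ A j) - f S) :=
    subadd f hsub A univ S
  have hmono2 : f (X ∪ univ.biUnion A) ≤ f (S ∪ univ.biUnion A) :=
    hmono _ _ (union_subset_union_left subset_union_left)
  -- combine
  have hkey : (1 / c) * (f (S ∪ univ.biUnion A) - f S) ≤ f S - f X := by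
    calc (1 / c) * (f (S ∪ univ.biUnion A) - f S)
        ≤ (1 / c) * ∑ j : Fin a, (f (S ∪ A j) - f S) := by
          apply mul_le_mul_of_nonneg_left hsub2 (by positivity)
      _ = ∑ n ∈ Finset.range a, ((1 / c) * (f (S ∪ AA n) - f S)) := hsum2.symm
      _ ≤ f S - f X := hsum1
  have hc1 : (0 : ℝ) < c + 1 := by linarith
  rw [ge_iff_le, one_div, inv_mul_le_iff₀ hc1]
  have hPD : f (S ∪ univ.biUnion A) - f S ≤ c * (f S - f X) := by
    rw [← div_le_iff₀' hc]
    rw [one_div_mul_eq_div] at hkey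
    exact hkey
  linarith
end

section
/- (Lemma 2) The approximate throughput reduction function Λ̄ : Finset E → ℝ is monotone and submodular. -/
/-!
Attacking more edges only lowers capacities, and since `γ ≥ 0` the capacity vector of `A ∪ B`
is the pointwise minimum of those of `A` and `B`. Both `λ̃¹_i` and each factor
`min (C̃_A(e) / S(e)) 1` of `Δ_i` are monotone functions of this vector that commute with
minima, so as set functions they send `A ∪ B` to a minimum; such functions are antitone and
supermodular. Nonnegative antitone supermodular functions are closed under products, so
every `λ̃²_i = λ̃¹_i · Δ_i` is antitone and supermodular, and `Λ̄ = Σ_i (λ_i - λ̃²_i)` is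
monotone and submodular.
-/

open Finset

section Lattice

variable {α : Type*} [Lattice α]

def IsSupermodular (f : α → ℝ) : Prop :=
  ∀ a b, f a + f b ≤ f (a ⊔ b) + f (a ⊓ b)

lemma antitone_of_map_sup_eq_min {f : α → ℝ} (hf : ∀ a b, f (a ⊔ b) = min (f a) (f b)) :
    Antitone f := fun a b hab => by
  rw [← sup_eq_right.2 hab, hf]
  exact min_le_left _ _

lemma isSupermodular_of_map_sup_eq_min {f : α → ℝ}
    (hf : ∀ a b, f (a ⊔ b) = min (f a) (f b)) : IsSupermodular f := fun a b => by
  have hanti := antitone_of_map_sup_eq_min hf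
  have ha := hanti (inf_le_left : a ⊓ b ≤ a)
  have hb := hanti (inf_le_right : a ⊓ b ≤ b)
  rw [hf, min_def]
  split_ifs <;> linarith

lemma Antitone.mul_of_nonneg {f g : α → ℝ} (hf : Antitone f) (hg : Antitone g) (hf0 : 0 ≤ f)
    (hg0 : 0 ≤ g) : Antitone (f * g) := fun _ _ hab =>
  mul_le_mul (hf hab) (hg hab) (hg0 _) (hf0 _)

lemma IsSupermodular.mul {f g : α → ℝ} (hf : IsSupermodular f) (hg : IsSupermodular g)
    (hf_anti : Antitone f) (hg_anti : Antitone g) (hf0 : 0 ≤ f) (hg0 : 0 ≤ g) :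
    IsSupermodular (f * g) := fun a b => by
  simp only [Pi.mul_apply]
  have hfa := hf_anti (le_sup_left : a ≤ a ⊔ b)
  have hfb := hf_anti (le_sup_right : b ≤ a ⊔ b)
  have hga := hg_anti (le_sup_left : a ≤ a ⊔ b)
  have hgb := hg_anti (le_sup_right : b ≤ a ⊔ b)
  have hinf : (f a + f b - f (a ⊔ b)) * (g a + g b - g (a ⊔ b)) ≤ f (a ⊓ b) * g (a ⊓ b) :=
    mul_le_mul (by linarith [hf a b]) (by linarith [hg a b])
      (by rw [add_sub_assoc]; exact add_nonneg (hg0 a) (sub_nonneg.2 hgb)) (hf0 _)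
  -- with `u = a ⊔ b`, the left side of `hinf` exceeds `f a g a + f b g b - f u g u` by
  -- `(f a - f u) (g b - g u) + (f b - f u) (g a - g u) ≥ 0`
  nlinarith [mul_nonneg (sub_nonneg.2 hfa) (sub_nonneg.2 hgb),
    mul_nonneg (sub_nonneg.2 hfb) (sub_nonneg.2 hga)]

lemma antitone_prod {ι : Type*} {s : Finset ι} {f : ι → α → ℝ} (hf : ∀ i ∈ s, Antitone (f i))
    (hf0 : ∀ i ∈ s, 0 ≤ f i) : Antitone fun a => ∏ i ∈ s, f i a := fun _ _ hab =>
  prod_le_prod (fun i hi => hf0 i hi _) fun i hi => hf i hi hab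

lemma isSupermodular_prod {ι : Type*} [DecidableEq ι] {s : Finset ι} {f : ι → α → ℝ}
    (hf : ∀ i ∈ s, IsSupermodular (f i)) (hf_anti : ∀ i ∈ s, Antitone (f i))
    (hf0 : ∀ i ∈ s, 0 ≤ f i) : IsSupermodular fun a => ∏ i ∈ s, f i a := by
  induction s using Finset.induction_on with
  | empty => intro a b; simp
  | insert j s hj ih =>
    simp only [forall_mem_insert] at hf hf_anti hf0
    simp_rw [prod_insert hj]
    exact hf.1.mul (ih hf.2 hf_anti.2 hf0.2) hf_anti.1 (antitone_prod hf_anti.2 hf0.2) hf0.1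
      fun a => prod_nonneg fun i hi => hf0.2 i hi a

lemma isSupermodular_sum {ι : Type*} {s : Finset ι} {f : ι → α → ℝ}
    (hf : ∀ i ∈ s, IsSupermodular (f i)) : IsSupermodular fun a => ∑ i ∈ s, f i a :=
  fun a b => by
    simp only [← sum_add_distrib]
    exact sum_le_sum fun i hi => hf i hi a b

end Lattice

lemma IsSupermodular.sub_le_sub_insert {E : Type*} [DecidableEq E] {f : Finset E → ℝ}
    (hf : IsSupermodular f) (hf_anti : Antitone f) {A B : Finset E} (hAB : A ⊆ B) (e : E) :
    f (insert e A) - f A ≤ f (insert e B) - f B := by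
  by_cases he : e ∈ B
  · rw [insert_eq_self.2 he, sub_self]
    exact sub_nonpos.2 (hf_anti (subset_insert e A))
  · have := hf (insert e A) B
    rw [sup_eq_union, inf_eq_inter, insert_union, union_eq_right.2 hAB,
      insert_inter_of_notMem he, inter_eq_left.2 hAB] at this
    linarith

lemma Finset.inf'_inf_eq {ι β : Type*} [SemilatticeInf β] {s : Finset ι} (hs : s.Nonempty)
    (f g : ι → β) : s.inf' hs (f ⊓ g) = s.inf' hs f ⊓ s.inf' hs g := by
  refine le_antisymm (le_inf ?_ ?_) ((le_inf'_iff hs _).2 fun i hi => ?_)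
  · exact (le_inf'_iff hs _).2 fun i hi => (inf'_le _ hi).trans inf_le_left
  · exact (le_inf'_iff hs _).2 fun i hi => (inf'_le _ hi).trans inf_le_right
  · exact inf_le_inf (inf'_le _ hi) (inf'_le _ hi)

section Throughput

variable {ι : Type*}

noncomputable def cappedFlow (c : ℝ) (T : Finset ι) (y : ι → ℝ) : ℝ :=
  if h : T.Nonempty then min c (T.inf' h y) else c

lemma cappedFlow_inf (c : ℝ) (T : Finset ι) (y z : ι → ℝ) :
    cappedFlow c T (y ⊓ z) = min (cappedFlow c T y) (cappedFlow c T z) := by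
  unfold cappedFlow
  split_ifs with h
  · rw [inf'_inf_eq, inf_inf_distrib_left]
  · exact (min_self c).symm

lemma cappedFlow_nonneg {c : ℝ} (hc : 0 ≤ c) (T : Finset ι) {y : ι → ℝ} (hy : 0 ≤ y) :
    0 ≤ cappedFlow c T y := by
  unfold cappedFlow
  split_ifs with h
  · exact le_min hc ((le_inf'_iff h _).2 fun i _ => hy i)
  · exact hc

noncomputable def congestionFactor (s : Finset ι) (S y : ι → ℝ) : ℝ :=
  ∏ i ∈ s with y i ≤ S i, y i / S i

lemma congestionFactor_eq_prod_min {s : Finset ι} {S : ι → ℝ} (hS : ∀ i ∈ s, 0 < S i)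
    (y : ι → ℝ) : congestionFactor s S y = ∏ i ∈ s, min (y i / S i) 1 := by
  rw [congestionFactor, prod_filter]
  refine prod_congr rfl fun i hi => ?_
  split_ifs with h
  · exact (min_eq_left ((div_le_one (hS i hi)).2 h)).symm
  · exact (min_eq_right ((one_le_div (hS i hi)).2 (not_le.1 h).le)).symm

lemma congestionFactor_comp {α : Type*} [Lattice α] [DecidableEq ι] {s : Finset ι} {S : ι → ℝ}
    (hS : ∀ i ∈ s, 0 < S i) {u : α → ι → ℝ} (hu : ∀ a b, u (a ⊔ b) = u a ⊓ u b)
    (hu0 : ∀ a, 0 ≤ u a) :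
    IsSupermodular (congestionFactor s S ∘ u) ∧ Antitone (congestionFactor s S ∘ u) ∧
      0 ≤ congestionFactor s S ∘ u := by
  set f : ι → α → ℝ := fun i a => min (u a i / S i) 1
  have hcomp : congestionFactor s S ∘ u = fun a => ∏ i ∈ s, f i a :=
    funext fun a => congestionFactor_eq_prod_min hS (u a)
  have hf (i : ι) (hi : i ∈ s) (a b : α) : f i (a ⊔ b) = min (f i a) (f i b) := by
    simp only [f, hu]
    exact Monotone.map_min fun x y hxy =>
      min_le_min_right _ (div_le_div_of_nonneg_right hxy (hS i hi).le)
  have hf0 (i : ι) (hi : i ∈ s) (a : α) : 0 ≤ f i a :=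
    le_min (div_nonneg (hu0 a i) (hS i hi).le) zero_le_one
  have hf_anti (i : ι) (hi : i ∈ s) := antitone_of_map_sup_eq_min (hf i hi)
  rw [hcomp]
  exact ⟨isSupermodular_prod (fun i hi => isSupermodular_of_map_sup_eq_min (hf i hi))
      hf_anti hf0,
    antitone_prod hf_anti hf0, fun a => prod_nonneg fun i hi => hf0 i hi a⟩

end Throughput

lemma ite_mem_union_eq_min {E : Type*} [DecidableEq E] {γ : ℝ} (hγ : 0 ≤ γ) (c : ℝ)
    (A B : Finset E) (e : E) :
    (if e ∈ A ∪ B then c - γ else c) =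
      min (if e ∈ A then c - γ else c) (if e ∈ B then c - γ else c) := by
  by_cases hA : e ∈ A <;> by_cases hB : e ∈ B <;> simp [hA, hB, hγ]

theorem approx_reduction_monotone_submodular_general
    {E : Type*} [Fintype E] [DecidableEq E]
    (k : ℕ)
    (p : Fin k → Finset E)
    (lam : Fin k → ℝ) (hlam : ∀ i, 0 < lam i)
    (C : E → ℝ) (γ : ℝ) (hγ : 0 ≤ γ) (hγC : ∀ e, γ ≤ C e) :
    let Ct : Finset E → E → ℝ := fun A e => if e ∈ A then C e - γ else C e
    let E1 : Finset E :=
      univ.filter (fun e => ({i | e ∈ p i} : Finset (Fin k)).card = 1)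
    let E2 : Finset E :=
      univ.filter (fun e => 2 ≤ ({i | e ∈ p i} : Finset (Fin k)).card)
    let S : E → ℝ := fun e => ∑ j ∈ ({j | e ∈ p j} : Finset (Fin k)), lam j
    let lam1 : Fin k → Finset E → ℝ := fun i A =>
      if h : (p i ∩ E1).Nonempty then min (lam i) ((p i ∩ E1).inf' h (Ct A))
      else lam i
    let Δ : Fin k → Finset E → ℝ := fun i A =>
      ∏ e ∈ (p i ∩ E2).filter (fun e => Ct A e ≤ S e), Ct A e / S e
    let lam2 : Fin k → Finset E → ℝ := fun i A => lam1 i A * Δ i A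
    let Lbar : Finset E → ℝ := fun A => ∑ i : Fin k, (lam i - lam2 i A)
    (∀ A B : Finset E, A ⊆ B → Lbar A ≤ Lbar B) ∧
    (∀ A B : Finset E, A ⊆ B → ∀ e : E,
      Lbar (insert e A) - Lbar A ≥ Lbar (insert e B) - Lbar B) := by
  intro Ct E1 E2 S lam1 Δ lam2 Lbar
  have hCt (A B : Finset E) : Ct (A ⊔ B) = Ct A ⊓ Ct B :=
    funext fun e => ite_mem_union_eq_min hγ (C e) A B e
  have hCt0 (A : Finset E) (e : E) : 0 ≤ Ct A e := by
    dsimp only [Ct]; split_ifs <;> linarith [hγC e]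
  have hS (e : E) (he : e ∈ E2) : 0 < S e := by
    refine sum_pos (fun j _ => hlam j) (card_pos.1 ?_)
    have := (mem_filter.1 he).2
    omega
  have hlam2 (i : Fin k) : IsSupermodular (lam2 i) ∧ Antitone (lam2 i) := by
    have hlam1 (A B : Finset E) : lam1 i (A ⊔ B) = min (lam1 i A) (lam1 i B) := by
      change cappedFlow _ _ (Ct (A ⊔ B)) = min (cappedFlow _ _ (Ct A)) (cappedFlow _ _ (Ct B))
      rw [hCt, cappedFlow_inf]
    have hlam1_0 : 0 ≤ lam1 i := fun A => cappedFlow_nonneg (hlam i).le _ (hCt0 A)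
    obtain ⟨hΔ, hΔ_anti, hΔ_0⟩ : IsSupermodular (Δ i) ∧ Antitone (Δ i) ∧ 0 ≤ Δ i :=
      congestionFactor_comp (fun e he => hS e (mem_inter.1 he).2) hCt hCt0
    have hlam1_anti := antitone_of_map_sup_eq_min hlam1
    exact ⟨(isSupermodular_of_map_sup_eq_min hlam1).mul hΔ hlam1_anti hΔ_anti hlam1_0 hΔ_0,
      hlam1_anti.mul_of_nonneg hΔ_anti hlam1_0 hΔ_0⟩
  have hsum_anti : Antitone fun A => ∑ i, lam2 i A :=
    fun A B hAB => sum_le_sum fun i _ => (hlam2 i).2 hAB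
  have hLbar (A : Finset E) : Lbar A = ∑ i, lam i - ∑ i, lam2 i A := sum_sub_distrib _ _
  refine ⟨fun A B hAB => ?_, fun A B hAB e => ?_⟩
  · simp only [hLbar]
    linarith [hsum_anti hAB]
  · have := (isSupermodular_sum fun i _ => (hlam2 i).1).sub_le_sub_insert hsum_anti hAB e
    simp only [hLbar]
    linarith

/-- Lemma 2: the approximate throughput reduction function `Λ̄` is monotone and
submodular. -/
theorem approx_reduction_monotone_submodular
    {E : Type*} [Fintype E] [DecidableEq E]
    (k : ℕ) (hk : 1 ≤ k)
    (p : Fin k → Finset E) (hp : ∀ i, (p i).Nonempty)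
    (lam : Fin k → ℝ) (hlam : ∀ i, 0 < lam i)
    (C : E → ℝ) (γ : ℝ) (hγ : 0 ≤ γ) (hγC : ∀ e, γ ≤ C e) :
    let Ct : Finset E → E → ℝ := fun A e => if e ∈ A then C e - γ else C e
    let E1 : Finset E :=
      univ.filter (fun e => ({i | e ∈ p i} : Finset (Fin k)).card = 1)
    let E2 : Finset E :=
      univ.filter (fun e => 2 ≤ ({i | e ∈ p i} : Finset (Fin k)).card)
    let S : E → ℝ := fun e => ∑ j ∈ ({j | e ∈ p j} : Finset (Fin k)), lam j
    let lam1 : Fin k → Finset E → ℝ := fun i A =>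
      if h : (p i ∩ E1).Nonempty then min (lam i) ((p i ∩ E1).inf' h (Ct A))
      else lam i
    let Δ : Fin k → Finset E → ℝ := fun i A =>
      ∏ e ∈ (p i ∩ E2).filter (fun e => Ct A e ≤ S e), Ct A e / S e
    let lam2 : Fin k → Finset E → ℝ := fun i A => lam1 i A * Δ i A
    let Lbar : Finset E → ℝ := fun A => ∑ i : Fin k, (lam i - lam2 i A)
    (∀ A B : Finset E, A ⊆ B → Lbar A ≤ Lbar B) ∧
    (∀ A B : Finset E, A ⊆ B → ∀ e : E,
      Lbar (insert e A) - Lbar A ≥ Lbar (insert e B) - Lbar B) :=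
  approx_reduction_monotone_submodular_general k p lam hlam C γ hγ hγC
end

section
/- (Lemma 3, lower bound) For every A : Finset E, the vector (λ̃²_i(A))_{i ∈ Fin k} is feasible for A: 0 ≤ λ̃²_i(A) ≤ λ i for every i, and for every edge e ∈ E, Σ_{i : e ∈ p i} λ̃²_i(A) ≤ C̃_A(e). (Consequently the throughput after interdiction T(A) satisfies T(A) ≥ Σ_i λ̃²_i(A), i.e., Λ(A) ≤ Λ̄(A).) -/
open Finset

/-- Lemma 3 (lower bound): the vector `(λ̃²_i(A))_i` is feasible for `A`, i.e.
`0 ≤ λ̃²_i(A) ≤ λ i` for every `i` and the residual capacity constraint holds on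
every edge. -/
theorem approx_solution_feasible
    {E : Type*} [Fintype E] [DecidableEq E]
    (k : ℕ) (hk : 1 ≤ k)
    (p : Fin k → Finset E) (hp : ∀ i, (p i).Nonempty)
    (lam : Fin k → ℝ) (hlam : ∀ i, 0 < lam i)
    (C : E → ℝ) (γ : ℝ) (hγ : 0 ≤ γ) (hγC : ∀ e, γ ≤ C e) :
    let Ct : Finset E → E → ℝ := fun A e => if e ∈ A then C e - γ else C e
    let E1 : Finset E :=
      univ.filter (fun e => ({i | e ∈ p i} : Finset (Fin k)).card = 1)
    let E2 : Finset E :=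
      univ.filter (fun e => 2 ≤ ({i | e ∈ p i} : Finset (Fin k)).card)
    let S : E → ℝ := fun e => ∑ j ∈ ({j | e ∈ p j} : Finset (Fin k)), lam j
    let lam1 : Fin k → Finset E → ℝ := fun i A =>
      if h : (p i ∩ E1).Nonempty then min (lam i) ((p i ∩ E1).inf' h (Ct A))
      else lam i
    let Δ : Fin k → Finset E → ℝ := fun i A =>
      ∏ e ∈ (p i ∩ E2).filter (fun e => Ct A e ≤ S e), Ct A e / S e
    let lam2 : Fin k → Finset E → ℝ := fun i A => lam1 i A * Δ i A
    ∀ A : Finset E,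
      (∀ i : Fin k, 0 ≤ lam2 i A ∧ lam2 i A ≤ lam i) ∧
      (∀ e : E, ∑ i ∈ ({i | e ∈ p i} : Finset (Fin k)), lam2 i A ≤ Ct A e) := by
  intro Ct E1 E2 S lam1 Δ lam2 A
  -- residual capacities are nonnegative
  have hCt0 : ∀ e, 0 ≤ Ct A e := by
    intro e
    simp only [Ct]
    split
    · linarith [hγC e]
    · linarith [hγ, hγC e]
  -- S e > 0 when some path contains e
  have hSpos : ∀ (e : E) (i : Fin k), e ∈ p i → 0 < S e := by
    intro e i hi
    have hmem : i ∈ ({j | e ∈ p j} : Finset (Fin k)) := by simp [hi]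
    exact Finset.sum_pos' (fun j _ => (hlam j).le) ⟨i, hmem, hlam i⟩
  -- each factor of Δ is in [0,1]
  have hfac : ∀ (i : Fin k) (e : E),
      e ∈ (p i ∩ E2).filter (fun e => Ct A e ≤ S e) →
      0 ≤ Ct A e / S e ∧ Ct A e / S e ≤ 1 := by
    intro i e he
    rw [mem_filter, mem_inter] at he
    have hS := hSpos e i he.1.1
    exact ⟨div_nonneg (hCt0 e) hS.le, div_le_one_of_le₀ he.2 hS.le⟩
  have hΔ0 : ∀ i, 0 ≤ Δ i A := fun i =>
    Finset.prod_nonneg fun e he => (hfac i e he).1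
  have hΔ1 : ∀ i, Δ i A ≤ 1 := fun i =>
    Finset.prod_le_one (fun e he => (hfac i e he).1) (fun e he => (hfac i e he).2)
  have hlam1nn : ∀ i, 0 ≤ lam1 i A := by
    intro i
    simp only [lam1]
    split
    · exact le_min (hlam i).le (Finset.le_inf' _ _ fun e _ => hCt0 e)
    · exact (hlam i).le
  have hlam1le : ∀ i, lam1 i A ≤ lam i := by
    intro i
    simp only [lam1]
    split
    · exact min_le_left _ _
    · exact le_rfl
  have hlam2nn : ∀ i, 0 ≤ lam2 i A := fun i => mul_nonneg (hlam1nn i) (hΔ0 i)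
  have hlam2le1 : ∀ i, lam2 i A ≤ lam1 i A := fun i =>
    mul_le_of_le_one_right (hlam1nn i) (hΔ1 i)
  refine ⟨fun i => ⟨hlam2nn i, (hlam2le1 i).trans (hlam1le i)⟩, ?_⟩
  intro e
  set I : Finset (Fin k) := ({i | e ∈ p i} : Finset (Fin k)) with hI
  have hImem : ∀ i : Fin k, i ∈ I ↔ e ∈ p i := by intro i; simp [hI]
  rcases Nat.lt_or_ge I.card 2 with hc | hc
  · interval_cases h : I.card
    · -- no path uses e
      rw [Finset.card_eq_zero.mp h, Finset.sum_empty]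
      exact hCt0 e
    · -- exactly one path uses e : e ∈ E1
      obtain ⟨i0, hi0⟩ := Finset.card_eq_one.mp h
      have hei0 : e ∈ p i0 := (hImem i0).mp (by simp [hi0])
      have heE1 : e ∈ E1 := by
        simp only [E1, mem_filter, mem_univ, true_and]
        exact h ▸ rfl
      have hne : (p i0 ∩ E1).Nonempty := ⟨e, mem_inter.mpr ⟨hei0, heE1⟩⟩
      have h1 : lam1 i0 A ≤ Ct A e := by
        simp only [lam1, dif_pos hne]
        exact (min_le_right _ _).trans
          (Finset.inf'_le _ (mem_inter.mpr ⟨hei0, heE1⟩))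
      rw [hi0, Finset.sum_singleton]
      exact (hlam2le1 i0).trans h1
  · -- e lies on at least two paths : e ∈ E2
    have heE2 : e ∈ E2 := by
      simp only [E2, mem_filter, mem_univ, true_and]
      exact hc
    have hSe : 0 < S e := by
      obtain ⟨i0, hi0⟩ := Finset.card_pos.mp (by omega : 0 < I.card)
      exact hSpos e i0 ((hImem i0).mp hi0)
    rcases le_or_gt (Ct A e) (S e) with hCS | hCS
    · -- saturated edge
      have hkey : ∀ i ∈ I, lam2 i A ≤ lam i * (Ct A e / S e) := by
        intro i hi
        have hei : e ∈ p i := (hImem i).mp hi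
        have hef : e ∈ (p i ∩ E2).filter (fun e => Ct A e ≤ S e) := by
          rw [mem_filter, mem_inter]
          exact ⟨⟨hei, heE2⟩, hCS⟩
        have hΔle : Δ i A ≤ Ct A e / S e := by
          calc Δ i A = (Ct A e / S e) *
              ∏ x ∈ ((p i ∩ E2).filter (fun e => Ct A e ≤ S e)).erase e,
                Ct A x / S x :=
              (Finset.mul_prod_erase _ (fun x => Ct A x / S x) hef).symm
            _ ≤ (Ct A e / S e) * 1 := by
                refine mul_le_mul_of_nonneg_left ?_ (div_nonneg (hCt0 e) hSe.le)
                exact Finset.prod_le_one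
                  (fun x hx => (hfac i x (Finset.mem_of_mem_erase hx)).1)
                  (fun x hx => (hfac i x (Finset.mem_of_mem_erase hx)).2)
            _ = Ct A e / S e := mul_one _
        calc lam2 i A ≤ lam i * Δ i A :=
              mul_le_mul_of_nonneg_right (hlam1le i) (hΔ0 i)
          _ ≤ lam i * (Ct A e / S e) :=
              mul_le_mul_of_nonneg_left hΔle (hlam i).le
      calc ∑ i ∈ I, lam2 i A ≤ ∑ i ∈ I, lam i * (Ct A e / S e) :=
            Finset.sum_le_sum hkey
        _ = S e * (Ct A e / S e) := by rw [← Finset.sum_mul]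
        _ = Ct A e := by field_simp
    · -- slack edge
      calc ∑ i ∈ I, lam2 i A ≤ ∑ i ∈ I, lam i :=
            Finset.sum_le_sum fun i _ => (hlam2le1 i).trans (hlam1le i)
        _ = S e := rfl
        _ ≤ Ct A e := hCS.le
end

section
/- (Lemma 3, upper bound) Let b = max_{i ∈ Fin k} |p i ∩ E2|. For every A : Finset E and every vector λ̃ : Fin k → ℝ that is feasible for A, Σ_i (λ i − λ̃²_i(A)) ≤ (b + 1) · Σ_i (λ i − λ̃ i). -/
open Finset

private lemma one_sub_prod_le_sum_one_sub {α : Type*} (s : Finset α) (f : α → ℝ)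
    (h0 : ∀ e ∈ s, 0 ≤ f e) (h1 : ∀ e ∈ s, f e ≤ 1) :
    1 - ∏ e ∈ s, f e ≤ ∑ e ∈ s, (1 - f e) := by
  induction s using Finset.cons_induction with
  | empty => simp
  | cons a s ha ih =>
    rw [Finset.prod_cons, Finset.sum_cons]
    have h0' : ∀ e ∈ s, 0 ≤ f e := fun e he => h0 e (Finset.mem_cons_of_mem he)
    have h1' : ∀ e ∈ s, f e ≤ 1 := fun e he => h1 e (Finset.mem_cons_of_mem he)
    have ha0 : 0 ≤ f a := h0 a (Finset.mem_cons_self _ _)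
    have ha1 : f a ≤ 1 := h1 a (Finset.mem_cons_self _ _)
    have hprod0 : 0 ≤ ∏ e ∈ s, f e := Finset.prod_nonneg h0'
    have hprod1 : ∏ e ∈ s, f e ≤ 1 := Finset.prod_le_one h0' h1'
    have := ih h0' h1'
    nlinarith

/-- Lemma 3 (upper bound): with `b` the maximum number of edges a user path
shares with other user paths, `Σ_i (λ i − λ̃²_i(A)) ≤ (b+1) Σ_i (λ i − λ̃ i)`
for every vector `λ̃` feasible for `A`. -/
theorem approx_reduction_upper_bound
    {E : Type*} [Fintype E] [DecidableEq E]
    (k : ℕ) (hk : 1 ≤ k)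
    (p : Fin k → Finset E) (hp : ∀ i, (p i).Nonempty)
    (lam : Fin k → ℝ) (hlam : ∀ i, 0 < lam i)
    (C : E → ℝ) (γ : ℝ) (hγ : 0 ≤ γ) (hγC : ∀ e, γ ≤ C e) :
    let Ct : Finset E → E → ℝ := fun A e => if e ∈ A then C e - γ else C e
    let E1 : Finset E :=
      univ.filter (fun e => ({i | e ∈ p i} : Finset (Fin k)).card = 1)
    let E2 : Finset E :=
      univ.filter (fun e => 2 ≤ ({i | e ∈ p i} : Finset (Fin k)).card)
    let S : E → ℝ := fun e => ∑ j ∈ ({j | e ∈ p j} : Finset (Fin k)), lam j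
    let lam1 : Fin k → Finset E → ℝ := fun i A =>
      if h : (p i ∩ E1).Nonempty then min (lam i) ((p i ∩ E1).inf' h (Ct A))
      else lam i
    let Δ : Fin k → Finset E → ℝ := fun i A =>
      ∏ e ∈ (p i ∩ E2).filter (fun e => Ct A e ≤ S e), Ct A e / S e
    let lam2 : Fin k → Finset E → ℝ := fun i A => lam1 i A * Δ i A
    let b : ℕ := univ.sup (fun i : Fin k => (p i ∩ E2).card)
    ∀ (A : Finset E) (lt : Fin k → ℝ),
      (∀ i : Fin k, 0 ≤ lt i ∧ lt i ≤ lam i) →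
      (∀ e : E, ∑ i ∈ ({i | e ∈ p i} : Finset (Fin k)), lt i ≤ Ct A e) →
      ∑ i : Fin k, (lam i - lam2 i A) ≤ ((b : ℝ) + 1) * ∑ i : Fin k, (lam i - lt i) := by
  intro Ct E1 E2 S lam1 Δ lam2 b A lt hlt hfeas
  have hCt0 : ∀ e, 0 ≤ Ct A e := by
    intro e
    simp only [Ct]
    split
    · linarith [hγC e]
    · linarith [hγ, hγC e]
  have hSpos : ∀ e i, e ∈ p i → 0 < S e := by
    intro e i he
    apply Finset.sum_pos (fun j _ => hlam j)
    exact ⟨i, by simp [he]⟩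
  set D : E → ℝ := fun e => ∑ j ∈ ({j | e ∈ p j} : Finset (Fin k)), (lam j - lt j) with hD
  have hD0 : ∀ e, 0 ≤ D e :=
    fun e => Finset.sum_nonneg fun j _ => by linarith [(hlt j).2]
  have hSD : ∀ e, S e - Ct A e ≤ D e := by
    intro e
    have := hfeas e
    simp only [hD, S, Finset.sum_sub_distrib]
    linarith
  -- key per-user bound
  have key : ∀ i : Fin k, lam i - lam2 i A ≤
      (lam i - lt i) + ∑ e ∈ p i ∩ E2, (lam i / S e) * D e := by
    intro i
    have hlam1_le : lam1 i A ≤ lam i := by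
      simp only [lam1]
      split
      · exact min_le_left _ _
      · exact le_refl _
    have hlt1 : lt i ≤ lam1 i A := by
      simp only [lam1]
      split
      case isTrue h =>
        refine le_min (hlt i).2 (Finset.le_inf' h _ fun e he => ?_)
        have hei : e ∈ p i := (Finset.mem_inter.mp he).1
        have he1 : e ∈ E1 := (Finset.mem_inter.mp he).2
        have hcard : (univ.filter (fun j => e ∈ p j) : Finset (Fin k)).card = 1 := by
          simpa [E1] using he1
        obtain ⟨a, hset⟩ := Finset.card_eq_one.mp hcard
        have hi : i ∈ univ.filter (fun j => e ∈ p j) := by simp [hei]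
        rw [hset, Finset.mem_singleton] at hi
        have := hfeas e
        rw [hset, Finset.sum_singleton] at this
        rw [hi]
        exact this
      case isFalse h => exact (hlt i).2
    set F := (p i ∩ E2).filter (fun e => Ct A e ≤ S e) with hF
    have hFsub : ∀ e ∈ F, e ∈ p i := fun e he =>
      (Finset.mem_inter.mp (Finset.mem_filter.mp he).1).1
    have hx0 : ∀ e ∈ F, 0 ≤ Ct A e / S e := fun e he =>
      div_nonneg (hCt0 e) (hSpos e i (hFsub e he)).le
    have hx1 : ∀ e ∈ F, Ct A e / S e ≤ 1 := fun e he =>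
      (div_le_one (hSpos e i (hFsub e he))).mpr (Finset.mem_filter.mp he).2
    have hΔ0 : 0 ≤ Δ i A := Finset.prod_nonneg hx0
    have hΔ1 : Δ i A ≤ 1 := Finset.prod_le_one hx0 hx1
    have h1 : 1 - Δ i A ≤ ∑ e ∈ F, (1 - Ct A e / S e) :=
      one_sub_prod_le_sum_one_sub F _ hx0 hx1
    have hterm : ∀ e ∈ F, lam i * (1 - Ct A e / S e) ≤ (lam i / S e) * D e := by
      intro e he
      have hS := hSpos e i (hFsub e he)
      have heq : lam i * (1 - Ct A e / S e) = (lam i / S e) * (S e - Ct A e) := by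
        field_simp
      rw [heq]
      exact mul_le_mul_of_nonneg_left (hSD e) (div_nonneg (hlam i).le hS.le)
    have expand : lam i - lam2 i A = (lam i - lam1 i A) + lam1 i A * (1 - Δ i A) := by
      simp only [lam2]; ring
    have step2 : lam1 i A * (1 - Δ i A) ≤ lam i * (1 - Δ i A) :=
      mul_le_mul_of_nonneg_right hlam1_le (by linarith)
    have step3 : lam i * (1 - Δ i A) ≤ ∑ e ∈ F, lam i * (1 - Ct A e / S e) := by
      rw [← Finset.mul_sum]
      exact mul_le_mul_of_nonneg_left h1 (hlam i).le
    have step4 : ∑ e ∈ F, lam i * (1 - Ct A e / S e) ≤ ∑ e ∈ F, (lam i / S e) * D e :=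
      Finset.sum_le_sum hterm
    have step5 : ∑ e ∈ F, (lam i / S e) * D e ≤ ∑ e ∈ p i ∩ E2, (lam i / S e) * D e := by
      apply Finset.sum_le_sum_of_subset_of_nonneg (Finset.filter_subset _ _)
      intro e he _
      exact mul_nonneg (div_nonneg (hlam i).le
        (hSpos e i (Finset.mem_inter.mp he).1).le) (hD0 e)
    rw [expand]
    linarith
  -- sum the key bound
  have main : ∑ i : Fin k, (lam i - lam2 i A) ≤
      (∑ i : Fin k, (lam i - lt i)) + ∑ i : Fin k, ∑ e ∈ p i ∩ E2, (lam i / S e) * D e := by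
    rw [← Finset.sum_add_distrib]
    exact Finset.sum_le_sum fun i _ => key i
  -- swap the double sum
  have hinterf : ∀ (i : Fin k) (g : E → ℝ),
      ∑ e ∈ p i ∩ E2, g e = ∑ e ∈ E2, if e ∈ p i then g e else 0 := by
    intro i g
    rw [inter_comm, ← Finset.filter_mem_eq_inter, Finset.sum_filter]
  have swap : ∑ i : Fin k, ∑ e ∈ p i ∩ E2, (lam i / S e) * D e
      = ∑ e ∈ E2, ∑ i ∈ ({i | e ∈ p i} : Finset (Fin k)), (lam i / S e) * D e := by
    calc ∑ i : Fin k, ∑ e ∈ p i ∩ E2, (lam i / S e) * D e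
        = ∑ i : Fin k, ∑ e ∈ E2, if e ∈ p i then (lam i / S e) * D e else 0 := by
          exact Finset.sum_congr rfl fun i _ => hinterf i _
      _ = ∑ e ∈ E2, ∑ i : Fin k, if e ∈ p i then (lam i / S e) * D e else 0 :=
          Finset.sum_comm
      _ = ∑ e ∈ E2, ∑ i ∈ ({i | e ∈ p i} : Finset (Fin k)), (lam i / S e) * D e := by
          exact Finset.sum_congr rfl fun e _ => (Finset.sum_filter _ _).symm
  -- evaluate inner sum: Σ_{i ∋ e} (λ i / S e) D e = D e
  have inner : ∀ e ∈ E2, ∑ i ∈ ({i | e ∈ p i} : Finset (Fin k)), (lam i / S e) * D e = D e := by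
    intro e he
    have hcard : 2 ≤ (univ.filter (fun j => e ∈ p j) : Finset (Fin k)).card := by
      simpa [E2] using he
    have hne : (univ.filter (fun j => e ∈ p j) : Finset (Fin k)).Nonempty :=
      Finset.card_pos.mp (by omega)
    obtain ⟨i0, hi0⟩ := hne
    have hS : 0 < S e := hSpos e i0 (by simpa using hi0)
    calc ∑ i ∈ ({i | e ∈ p i} : Finset (Fin k)), (lam i / S e) * D e
        = (∑ i ∈ ({i | e ∈ p i} : Finset (Fin k)), lam i) * (D e / S e) := by
          rw [Finset.sum_mul]
          exact Finset.sum_congr rfl fun i _ => by ring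
      _ = S e * (D e / S e) := rfl
      _ = D e := by field_simp
  -- bound Σ_{e ∈ E2} D e
  have last : ∑ e ∈ E2, D e ≤ (b : ℝ) * ∑ i : Fin k, (lam i - lt i) := by
    have hswap2 : ∑ e ∈ E2, D e
        = ∑ j : Fin k, ((p j ∩ E2).card : ℝ) * (lam j - lt j) := by
      calc ∑ e ∈ E2, D e
          = ∑ e ∈ E2, ∑ j : Fin k, if e ∈ p j then (lam j - lt j) else 0 := by
            refine Finset.sum_congr rfl fun e _ => ?_
            simp only [hD]
            rw [Finset.sum_filter]
        _ = ∑ j : Fin k, ∑ e ∈ E2, if e ∈ p j then (lam j - lt j) else 0 :=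
            Finset.sum_comm
        _ = ∑ j : Fin k, ∑ e ∈ p j ∩ E2, (lam j - lt j) := by
            exact Finset.sum_congr rfl fun j _ => (hinterf j _).symm
        _ = ∑ j : Fin k, ((p j ∩ E2).card : ℝ) * (lam j - lt j) := by
            exact Finset.sum_congr rfl fun j _ => by
              rw [Finset.sum_const, nsmul_eq_mul]
    rw [hswap2, Finset.mul_sum]
    apply Finset.sum_le_sum
    intro j _
    have hcb : (p j ∩ E2).card ≤ b := Finset.le_sup (f := fun i => (p i ∩ E2).card) (Finset.mem_univ j)
    have : ((p j ∩ E2).card : ℝ) ≤ (b : ℝ) := Nat.cast_le.mpr hcb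
    have hd : 0 ≤ lam j - lt j := by linarith [(hlt j).2]
    exact mul_le_mul_of_nonneg_right this hd
  have hE2sum : ∑ e ∈ E2, ∑ i ∈ ({i | e ∈ p i} : Finset (Fin k)), (lam i / S e) * D e
      = ∑ e ∈ E2, D e := Finset.sum_congr rfl inner
  rw [swap, hE2sum] at main
  linarith
end

section
/- (Lemma 4) Let S be a finite type, N₀ ≥ 1 a natural number, and w : S → ℝ a probability distribution (w(s) ≥ 0 for all s and Σ_s w(s) = 1) whose support {s : w(s) ≠ 0} has at most N₀ elements. Then there exists w' : S → ℝ such that: (i) for every s there is a natural number β with w'(s) = β/(N₀² + N₀); (ii) w'(s) ≥ 0 for all s and Σ_s w'(s) = 1; and (iii) for every nonnegative function g : S → ℝ, Σ_s w'(s)·g(s) ≥ (N₀/(N₀+1)) · Σ_s w(s)·g(s). -/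
/-- Lemma 4: any probability distribution supported on at most `N₀` points can be
rounded to one taking values in `{β/(N₀²+N₀) : β ∈ ℕ}` while losing at most a
factor `N₀/(N₀+1)` against every nonnegative objective. -/
theorem rationalize_strategy
    {S : Type*} [Fintype S]
    (N₀ : ℕ) (hN₀ : 1 ≤ N₀)
    (w : S → ℝ) (hw : ∀ s, 0 ≤ w s) (hsum : ∑ s, w s = 1)
    (hsupp : {s | w s ≠ 0}.ncard ≤ N₀) :
    ∃ w' : S → ℝ,
      (∀ s, ∃ β : ℕ, w' s = (β : ℝ) / ((N₀ : ℝ) ^ 2 + N₀)) ∧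
      ((∀ s, 0 ≤ w' s) ∧ ∑ s, w' s = 1) ∧
      (∀ g : S → ℝ, (∀ s, 0 ≤ g s) →
        ∑ s, w' s * g s ≥ ((N₀ : ℝ) / ((N₀ : ℝ) + 1)) * ∑ s, w s * g s) := by
  classical
  -- S is nonempty since the total weight is 1
  have hSne : Nonempty S := by
    by_contra h
    rw [not_nonempty_iff] at h
    simp [Finset.sum_of_isEmpty] at hsum
  obtain ⟨s₀⟩ := hSne
  set N : ℕ := N₀ ^ 2 + N₀ with hN
  have hNpos : 0 < N := by positivity
  have hNR : ((N : ℝ)) = (N₀ : ℝ) ^ 2 + N₀ := by push_cast [hN]; ring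
  have hNRpos : (0 : ℝ) < (N₀ : ℝ) ^ 2 + N₀ := by
    have : (1 : ℝ) ≤ (N₀ : ℝ) := by exact_mod_cast hN₀
    nlinarith
  set b : S → ℕ := fun s => ⌈(N₀ : ℝ) ^ 2 * w s⌉₊ with hb
  -- the support as a Finset
  set T : Finset S := Finset.univ.filter (fun s => w s ≠ 0) with hT
  have hTset : {s | w s ≠ 0} = ↑T := by ext s; simp [hT]
  have hTcard : T.card ≤ N₀ := by
    have := hsupp
    rwa [hTset, Set.ncard_coe_finset] at this
  have hb0 : ∀ s ∉ T, b s = 0 := by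
    intro s hs
    have : w s = 0 := by by_contra h; exact hs (by simp [hT, h])
    simp [hb, this]
  have hsumT : ∑ s ∈ T, w s = 1 := by
    rw [← hsum]
    refine Finset.sum_subset (Finset.subset_univ _) ?_
    intro s _ hs
    by_contra h; exact hs (by simp [hT, h])
  -- bound on the total of b
  have hbsum : ∑ s, b s ≤ N := by
    have h1 : ∑ s, b s = ∑ s ∈ T, b s := by
      rw [← Finset.sum_subset (Finset.subset_univ T) (fun s _ hs => hb0 s hs)]
    have h2 : ((∑ s ∈ T, b s : ℕ) : ℝ) ≤ (N : ℝ) := by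
      push_cast
      have hbd : ∀ s ∈ T, ((b s : ℝ)) ≤ (N₀ : ℝ) ^ 2 * w s + 1 := by
        intro s _
        have := Nat.ceil_lt_add_one (a := (N₀ : ℝ) ^ 2 * w s)
          (mul_nonneg (by positivity) (hw s))
        exact le_of_lt this
      calc ∑ s ∈ T, ((b s : ℝ)) ≤ ∑ s ∈ T, ((N₀ : ℝ) ^ 2 * w s + 1) :=
            Finset.sum_le_sum hbd
        _ = (N₀ : ℝ) ^ 2 * (∑ s ∈ T, w s) + T.card := by
            rw [Finset.sum_add_distrib, ← Finset.mul_sum]; simp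
        _ ≤ (N₀ : ℝ) ^ 2 * 1 + N₀ := by
            have : ((T.card : ℝ)) ≤ (N₀ : ℝ) := by exact_mod_cast hTcard
            rw [hsumT]; linarith
        _ = (N : ℝ) := by rw [hNR]; ring
    rw [h1]
    exact_mod_cast h2
  set D : ℕ := N - ∑ s, b s with hD
  set b' : S → ℕ := fun s => b s + (if s = s₀ then D else 0) with hb'
  have hb'sum : ∑ s, b' s = N := by
    simp only [hb', Finset.sum_add_distrib]
    rw [Finset.sum_ite_eq' Finset.univ s₀ (fun _ => D)]
    simp [hD, Nat.add_sub_cancel' hbsum]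
  refine ⟨fun s => (b' s : ℝ) / ((N₀ : ℝ) ^ 2 + N₀), fun s => ⟨b' s, rfl⟩,
    ⟨fun s => by positivity, ?_⟩, ?_⟩
  · rw [← Finset.sum_div]
    rw [show (∑ s, ((b' s : ℝ))) = ((∑ s, b' s : ℕ) : ℝ) by push_cast; ring]
    rw [hb'sum, hNR]
    field_simp
  · intro g hg
    have key : ∀ s, ((N₀ : ℝ) / ((N₀ : ℝ) + 1)) * (w s * g s) ≤
        (b' s : ℝ) / ((N₀ : ℝ) ^ 2 + N₀) * g s := by
      intro s
      have h1 : (N₀ : ℝ) ^ 2 * w s ≤ (b' s : ℝ) := by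
        have hle : (N₀ : ℝ) ^ 2 * w s ≤ (b s : ℝ) := Nat.le_ceil _
        have : (b s : ℝ) ≤ (b' s : ℝ) := by
          simp only [hb']; push_cast
          have : (0:ℝ) ≤ (if s = s₀ then (D:ℝ) else 0) := by positivity
          push_cast
          split <;> simp <;> positivity
        linarith
      have heq : ((N₀ : ℝ) / ((N₀ : ℝ) + 1)) * w s =
          (N₀ : ℝ) ^ 2 * w s / ((N₀ : ℝ) ^ 2 + N₀) := by
        have hne : (N₀ : ℝ) + 1 ≠ 0 := by positivity
        field_simp
      have h2 : ((N₀ : ℝ) / ((N₀ : ℝ) + 1)) * w s ≤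
          (b' s : ℝ) / ((N₀ : ℝ) ^ 2 + N₀) := by
        rw [heq]
        exact div_le_div_of_nonneg_right h1 hNRpos.le
      calc ((N₀ : ℝ) / ((N₀ : ℝ) + 1)) * (w s * g s)
          = (((N₀ : ℝ) / ((N₀ : ℝ) + 1)) * w s) * g s := by ring
        _ ≤ ((b' s : ℝ) / ((N₀ : ℝ) ^ 2 + N₀)) * g s :=
            mul_le_mul_of_nonneg_right h2 (hg s)
    calc ((N₀ : ℝ) / ((N₀ : ℝ) + 1)) * ∑ s, w s * g s
        = ∑ s, ((N₀ : ℝ) / ((N₀ : ℝ) + 1)) * (w s * g s) := by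
          rw [Finset.mul_sum]
      _ ≤ ∑ s, (b' s : ℝ) / ((N₀ : ℝ) ^ 2 + N₀) * g s :=
          Finset.sum_le_sum (fun s _ => key s)
end

section
/- (Lemma 5) Let F be a finite type, U a finite nonempty type, and Λ : F → U → ℕ. Let N ≥ 1 be a natural number and let w : F → ℝ be such that for each f there is a natural number β_f with w(f) = β_f/N, and Σ_f w(f) = 1. Suppose min_{P ∈ U} Σ_f w(f)·Λ(f, P) > 0, and set κ = min_{P ∈ U} Σ_f N·w(f)·Λ(f, P) (a positive natural number). Then the assignment x(f) = β_f satisfies Σ_f x(f)·Λ(f, P) ≥ κ for every P ∈ U and Σ_f x(f) = N; consequently, for every x* : F → ℕ that satisfies Σ_f x*(f)·Λ(f, P) ≥ κ for all P ∈ U and minimizes Σ_f x*(f) among all such assignments, κ / (Σ_f x*(f)) ≥ min_{P ∈ U} Σ_f w(f)·Λ(f, P). -/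
open Finset

/-- Lemma 5: the best ratio `κ/N_κ` over the covering integer programs `ILP(κ)`
is at least the worst-case throughput reduction of any strategy in `𝒲_N`. -/
theorem ilp_ratio_bound
    {F U : Type*} [Fintype F] [Fintype U] [Nonempty U]
    (Λ : F → U → ℕ) (N : ℕ) (hN : 1 ≤ N)
    (w : F → ℝ) (β : F → ℕ) (hwβ : ∀ f, w f = (β f : ℝ) / (N : ℝ))
    (hsum : ∑ f, w f = 1)
    (hpos : 0 < univ.inf' univ_nonempty (fun P : U => ∑ f, w f * ((Λ f P : ℝ))))
    (κ : ℕ) (hκ : κ = univ.inf' univ_nonempty (fun P : U => ∑ f, β f * Λ f P)) :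
    ((∀ P : U, κ ≤ ∑ f, β f * Λ f P) ∧ (∑ f, β f = N)) ∧
    (∀ x' : F → ℕ,
      (∀ P : U, κ ≤ ∑ f, x' f * Λ f P) →
      (∀ y : F → ℕ, (∀ P : U, κ ≤ ∑ f, y f * Λ f P) → ∑ f, x' f ≤ ∑ f, y f) →
      (κ : ℝ) / ((∑ f, x' f : ℕ) : ℝ) ≥
        univ.inf' univ_nonempty (fun P : U => ∑ f, w f * ((Λ f P : ℝ)))) := by
  have hNpos : (0 : ℝ) < N := by exact_mod_cast hN
  -- ∑ β = N
  have hβsum : ∑ f, β f = N := by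
    have h1 : (∑ f, (β f : ℝ)) / N = 1 := by
      rw [Finset.sum_div]
      simpa [hwβ] using hsum
    have h2 : (∑ f, (β f : ℝ)) = N := by
      field_simp at h1; exact h1
    exact_mod_cast h2
  have hfeas : ∀ P : U, κ ≤ ∑ f, β f * Λ f P := by
    intro P
    rw [hκ]
    exact Finset.inf'_le _ (mem_univ P)
  -- rewrite each real sum
  have hterm : ∀ P : U, ∑ f, w f * ((Λ f P : ℝ)) = ((∑ f, β f * Λ f P : ℕ) : ℝ) / N := by
    intro P
    push_cast
    rw [Finset.sum_div]
    refine Finset.sum_congr rfl fun f _ => ?_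
    rw [hwβ]; ring
  -- the real inf equals κ/N
  have hinf : univ.inf' univ_nonempty (fun P : U => ∑ f, w f * ((Λ f P : ℝ)))
      = (κ : ℝ) / N := by
    apply le_antisymm
    · obtain ⟨P₀, _, hP₀⟩ := Finset.exists_mem_eq_inf' (univ_nonempty)
        (fun P : U => ∑ f, β f * Λ f P)
      have : univ.inf' univ_nonempty (fun P : U => ∑ f, w f * ((Λ f P : ℝ)))
          ≤ ∑ f, w f * ((Λ f P₀ : ℝ)) := Finset.inf'_le _ (mem_univ P₀)
      calc univ.inf' univ_nonempty (fun P : U => ∑ f, w f * ((Λ f P : ℝ)))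
          ≤ ∑ f, w f * ((Λ f P₀ : ℝ)) := this
        _ = ((∑ f, β f * Λ f P₀ : ℕ) : ℝ) / N := hterm P₀
        _ = (κ : ℝ) / N := by rw [hκ, ← hP₀]
    · apply Finset.le_inf'
      intro P _
      rw [hterm P]
      apply div_le_div_of_nonneg_right ?_ hNpos.le
      exact_mod_cast hfeas P
  refine ⟨⟨hfeas, hβsum⟩, ?_⟩
  intro x' hx' hmin
  rw [hinf]
  have hκpos : 0 < κ := by
    by_contra h
    push_neg at h
    interval_cases κ
    rw [hinf] at hpos
    simp at hpos
  have hx'pos : 0 < ∑ f, x' f := by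
    by_contra h
    push_neg at h
    have h0 : ∑ f, x' f = 0 := Nat.le_zero.mp h
    have := hx' (Classical.arbitrary U)
    have hz : ∀ f ∈ univ, x' f = 0 := by
      intro f _; exact (Finset.sum_eq_zero_iff.mp h0) f (mem_univ f)
    rw [Finset.sum_congr rfl (fun f hf => by rw [hz f hf, Nat.zero_mul])] at this
    simp at this
    omega
  have hle : ∑ f, x' f ≤ N := hβsum ▸ hmin β hfeas
  have h1 : (0:ℝ) < ((∑ f, x' f : ℕ) : ℝ) := by exact_mod_cast hx'pos
  have h2 : ((∑ f, x' f : ℕ) : ℝ) ≤ N := by exact_mod_cast hle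
  exact div_le_div_of_nonneg_left (by positivity) h1 h2
end
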